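/- arXiv:1411.5866 — 5 statements merged into one kernel-verified Lean document; each statement's English description precedes it below -/
import Mathlib

section
/- For every θ-Hölder potential A : Ω → ℂ (0 < θ < 1) there exist a θ-Hölder map A* : Ω* → ℂ and a θ-Hölder map W : X → ℂ such that A*(y) = A(τ_y(x)) + W(σ̂⁻¹(y|x)) − W(y|x) for all (y|x) ∈ X (in particular the right-hand side does not depend on x), with the estimates ‖W‖_θ ≤ 3θ‖A‖_θ/(1−θ) and ‖A*‖_θ ≤ 2‖A‖_θ/(1−θ). -/
open scoped BigOperators
open Filter Topology

noncomputable section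

/-- The one-sided shift space on `d` symbols (also used for the backwards copy `Ω*`). -/
abbrev Bsp (d : ℕ) := ℕ → Fin d

/-- `agree n x x'` : the first `n` coordinates of `x` and `x'` coincide (`x ∼ₙ x'`). -/
def agree {d : ℕ} (n : ℕ) (x x' : Bsp d) : Prop := ∀ i < n, x i = x' i

/-- `C` is a `θ`-Hölder constant for `f`. -/
def HolderC {d : ℕ} {E : Type*} [SeminormedAddGroup E] (θ : ℝ) (f : Bsp d → E) (C : ℝ) : Prop :=
  ∀ (n : ℕ) (x x' : Bsp d), agree n x x' → ‖f x - f x'‖ ≤ C * θ ^ n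

/-- `C` is a `θ`-Hölder constant for a two-variable kernel on `X = Ω* × Ω`. -/
def HolderC2 {d : ℕ} (θ : ℝ) (k : Bsp d → Bsp d → ℂ) (C : ℝ) : Prop :=
  ∀ (n : ℕ) (y y' x x' : Bsp d), agree n y y' → agree n x x' →
    ‖k y x - k y' x'‖ ≤ C * θ ^ n

/-- The one-sided shift `σ` (same formula for `σ*` on the backwards copy). -/
def shift {d : ℕ} (x : Bsp d) : Bsp d := fun i => x (i + 1)

/-- Prepend one symbol: `cons a x = (a x)` (for `Ω*` this appends `a` as the new `y₁`). -/
def cons {d : ℕ} (a : Fin d) (x : Bsp d) : Bsp d := fun n => if n = 0 then a else x (n - 1)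

/-- `prep y k x = (y_k … y_1 x)` : prepend the first `k` symbols of `y` (in reversed order) to `x`. -/
def prep {d : ℕ} (y : Bsp d) (k : ℕ) (x : Bsp d) : Bsp d :=
  fun n => if n < k then y (k - 1 - n) else x (n - k)

/-- `prepW s x = (x₁ … xₙ x)` where `s i = x_{i+1}`. -/
def prepW {d n : ℕ} (s : Fin n → Fin d) (x : Bsp d) : Bsp d :=
  fun m => if h : m < n then s ⟨m, h⟩ else x (m - n)

/-- `appW y s = (y x₁ … xₙ) ∈ Ω*` where `s i = x_{i+1}` (so the new `y₁` is `xₙ`). -/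
def appW {d n : ℕ} (y : Bsp d) (s : Fin n → Fin d) : Bsp d :=
  fun m => if h : m < n then s ⟨n - 1 - m, by omega⟩ else y (m - n)

/-- Birkhoff sum `Aⁿ(x) = Σ_{k<n} A(σᵏ x)`. -/
def birkhoff {d : ℕ} (A : Bsp d → ℂ) (n : ℕ) (x : Bsp d) : ℂ :=
  ∑ k ∈ Finset.range n, A (fun i => x (i + k))

/-- Ruelle operator with a priori probability weights `w` on the symbols. -/
def Ruelle {d : ℕ} (w : Fin d → ℝ) (A : Bsp d → ℂ) (φ : Bsp d → ℂ) (x : Bsp d) : ℂ :=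
  ∑ a : Fin d, (w a : ℂ) * (Complex.exp (A (cons a x)) * φ (cons a x))

/-- Koopman operator `U_B φ = e^B · (φ ∘ σ)`. -/
def Koop {d : ℕ} (B : Bsp d → ℂ) (φ : Bsp d → ℂ) (x : Bsp d) : ℂ :=
  Complex.exp (B x) * φ (shift x)

/-- The measures `D_{n,x'}` paired against `φ`, with reference symbol `o` (for `0^∞`). -/
def Dn {d : ℕ} (w : Fin d → ℝ) (A : Bsp d → ℂ) (W : Bsp d → Bsp d → ℂ) (ψ : Bsp d → ℂ)
    (lam : ℂ) (o : Fin d) (n : ℕ) (x' : Bsp d) (φ : Bsp d → ℂ) : ℂ :=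
  ∑ s : Fin n → Fin d, ((∏ i, w (s i) : ℝ) : ℂ) *
    (ψ (prepW s x') * (Complex.exp (birkhoff A n (prepW s x')) / lam ^ n) *
      Complex.exp (-(W (appW (fun _ => o) s) x')) * φ (appW (fun _ => o) s))

/-!
Fix a reference point `x₀` and put `W(y|x) = Σ_{k ≥ 1} (A(y_k … y_1 x) − A(y_k … y_1 x₀))`.
The `k`-th term is at most `‖A‖_θ θᵏ`, and if `y ∼ₙ y'`, `x ∼ₙ x'` then for `k ≤ n` the `k`-th
terms of `W(y|x)` and `W(y'|x')` differ by at most `‖A‖_θ θ^{n+k}`; summing gives the Hölder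
bounds. Passing from `(y|x)` to `σ̂⁻¹(y|x)` shifts the series by one term, so
`A(τ_y x) + W(σ̂⁻¹(y|x)) − W(y|x)` does not depend on `x`; its value at `x = x₀`, where
`W(y|x₀) = 0`, is taken as `A*(y)`.
-/

section InvolutionKernel

variable {d : ℕ}

lemma agree.shift {n : ℕ} {y y' : Bsp d} (h : agree (n + 1) y y') :
    agree n (shift y) (shift y') :=
  fun i hi => h (i + 1) (by omega)

lemma prep_one (y x : Bsp d) : prep y 1 x = cons (y 0) x := by
  funext m
  rcases Nat.eq_zero_or_pos m with rfl | hm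
  · simp [prep, cons]
  · simp only [prep, cons, if_neg (show ¬m < 1 by omega), if_neg hm.ne']

lemma prep_shift_cons (y x : Bsp d) (k : ℕ) :
    prep (shift y) k (cons (y 0) x) = prep y (k + 1) x := by
  funext m
  simp only [prep, cons, shift]
  rcases lt_trichotomy m k with h | rfl | h
  · rw [if_pos h, if_pos (by omega)]; congr 1; omega
  · simp
  · rw [if_neg (by omega), if_neg (by omega), if_neg (by omega)]; congr 1

lemma agree_prep_self (y : Bsp d) (k : ℕ) (x x' : Bsp d) :
    agree k (prep y k x) (prep y k x') := by
  intro i hi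
  simp only [prep, if_pos hi]

lemma agree_prep_prep {n k : ℕ} {y y' x x' : Bsp d} (hk : k ≤ n) (hy : agree n y y')
    (hx : agree n x x') : agree (n + k) (prep y k x) (prep y' k x') := by
  intro i hi
  simp only [prep]
  split_ifs
  · exact hy _ (by omega)
  · exact hx _ (by omega)

lemma prep_congr_of_agree {n k : ℕ} {y y' : Bsp d} (hy : agree n y y') (hk : k ≤ n)
    (x : Bsp d) : prep y k x = prep y' k x := by
  funext i
  simp only [prep]
  split_ifs
  · exact hy _ (by omega)
  · rfl

lemma HolderC.nonneg {E : Type*} [SeminormedAddGroup E] {θ C : ℝ} {f : Bsp d → E}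
    (hf : HolderC θ f C) (x : Bsp d) : 0 ≤ C := by
  simpa using hf 0 x x fun i hi => rfl

lemma norm_tsum_le_of_le_geometric {E : Type*} [SeminormedAddCommGroup E] {θ c : ℝ}
    (hθ0 : 0 ≤ θ) (hθ1 : θ < 1) {f : ℕ → E} (hf : ∀ k, ‖f k‖ ≤ c * θ ^ k) :
    ‖∑' k, f k‖ ≤ c / (1 - θ) :=
  tsum_of_norm_bounded ((hasSum_geometric_of_lt_one hθ0 hθ1).mul_left c) hf

def kernelTerm (A : Bsp d → ℂ) (x₀ y x : Bsp d) (k : ℕ) : ℂ :=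
  A (prep y (k + 1) x) - A (prep y (k + 1) x₀)

def involutionKernel (A : Bsp d → ℂ) (x₀ y x : Bsp d) : ℂ :=
  ∑' k, kernelTerm A x₀ y x k

def dualPotential (A : Bsp d → ℂ) (x₀ y : Bsp d) : ℂ :=
  A (cons (y 0) x₀) + involutionKernel A x₀ (shift y) (cons (y 0) x₀)

variable {θ C : ℝ} {A : Bsp d → ℂ}

lemma norm_kernelTerm_le (hA : HolderC θ A C) (x₀ y x : Bsp d) (k : ℕ) :
    ‖kernelTerm A x₀ y x k‖ ≤ C * θ ^ (k + 1) :=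
  hA _ _ _ (agree_prep_self y (k + 1) x x₀)

lemma summable_kernelTerm (hθ0 : 0 ≤ θ) (hθ1 : θ < 1) (hA : HolderC θ A C) (x₀ y x : Bsp d) :
    Summable (kernelTerm A x₀ y x) := by
  refine .of_norm_bounded ((summable_geometric_of_lt_one hθ0 hθ1).mul_left (C * θ))
    fun k => (norm_kernelTerm_le hA x₀ y x k).trans_eq ?_
  ring

lemma norm_tsum_kernelTerm_add_le (hθ0 : 0 ≤ θ) (hθ1 : θ < 1) (hA : HolderC θ A C)
    (x₀ y x : Bsp d) (n : ℕ) :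
    ‖∑' k, kernelTerm A x₀ y x (k + n)‖ ≤ C * θ ^ (n + 1) / (1 - θ) :=
  norm_tsum_le_of_le_geometric hθ0 hθ1 fun k =>
    (norm_kernelTerm_le hA x₀ y x (k + n)).trans_eq (by ring)

lemma norm_involutionKernel_sub_le (hθ0 : 0 ≤ θ) (hθ1 : θ < 1) (hA : HolderC θ A C)
    (x₀ y y' x x' : Bsp d) (n : ℕ) :
    ‖involutionKernel A x₀ y x - involutionKernel A x₀ y' x'‖ ≤
      ∑ k ∈ Finset.range n, ‖kernelTerm A x₀ y x k - kernelTerm A x₀ y' x' k‖ +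
        2 * (C * θ ^ (n + 1) / (1 - θ)) := by
  have hs := summable_kernelTerm hθ0 hθ1 hA x₀
  have hsplit : involutionKernel A x₀ y x - involutionKernel A x₀ y' x' =
      ∑ k ∈ Finset.range n, (kernelTerm A x₀ y x k - kernelTerm A x₀ y' x' k) +
        (∑' k, kernelTerm A x₀ y x (k + n) - ∑' k, kernelTerm A x₀ y' x' (k + n)) := by
    rw [involutionKernel, involutionKernel, ← (hs y x).sum_add_tsum_nat_add n,
      ← (hs y' x').sum_add_tsum_nat_add n, Finset.sum_sub_distrib]
    ring
  rw [hsplit]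
  grw [norm_add_le, norm_sub_le, norm_sum_le, norm_tsum_kernelTerm_add_le hθ0 hθ1 hA,
    norm_tsum_kernelTerm_add_le hθ0 hθ1 hA]
  linarith

lemma involutionKernel_shift_cons_sub (hθ0 : 0 ≤ θ) (hθ1 : θ < 1) (hA : HolderC θ A C)
    (x₀ y x : Bsp d) :
    involutionKernel A x₀ (shift y) (cons (y 0) x) -
        involutionKernel A x₀ (shift y) (cons (y 0) x₀) =
      involutionKernel A x₀ y x - (A (cons (y 0) x) - A (cons (y 0) x₀)) := by
  have hs := summable_kernelTerm hθ0 hθ1 hA x₀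
  rw [involutionKernel, involutionKernel, ← (hs _ _).tsum_sub (hs _ _), involutionKernel,
    (hs y x).tsum_eq_zero_add, kernelTerm, zero_add, prep_one, prep_one, add_sub_cancel_left]
  refine tsum_congr fun k => ?_
  simp only [kernelTerm, prep_shift_cons]
  ring

lemma dualPotential_eq (hθ0 : 0 ≤ θ) (hθ1 : θ < 1) (hA : HolderC θ A C) (x₀ y x : Bsp d) :
    dualPotential A x₀ y =
      A (cons (y 0) x) + involutionKernel A x₀ (shift y) (cons (y 0) x) -
        involutionKernel A x₀ y x := by
  rw [dualPotential]
  linear_combination (involutionKernel_shift_cons_sub hθ0 hθ1 hA x₀ y x).symm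

lemma holderC2_involutionKernel (hθ0 : 0 ≤ θ) (hθ1 : θ < 1) (hA : HolderC θ A C)
    (x₀ : Bsp d) : HolderC2 θ (involutionKernel A x₀) (3 * θ * C / (1 - θ)) := by
  intro n y y' x x' hy hx
  have hhead : ∀ k ∈ Finset.range n,
      ‖kernelTerm A x₀ y x k - kernelTerm A x₀ y' x' k‖ ≤ C * θ ^ (n + 1) * θ ^ k := by
    intro k hk
    have hk : k + 1 ≤ n := Finset.mem_range.1 hk
    rw [kernelTerm, kernelTerm, prep_congr_of_agree hy hk x₀, sub_sub_sub_cancel_right]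
    exact (hA _ _ _ (agree_prep_prep hk hy hx)).trans_eq (by ring)
  have hgeom : ∑ k ∈ Finset.range n, θ ^ k ≤ 1 / (1 - θ) := by
    have h := geom_sum_Ico_le_of_lt_one (x := θ) (m := 0) (n := n) hθ0 hθ1
    rwa [← Finset.range_eq_Ico, pow_zero] at h
  have hC := mul_nonneg (hA.nonneg x₀) (pow_nonneg hθ0 (n + 1))
  calc ‖involutionKernel A x₀ y x - involutionKernel A x₀ y' x'‖
      ≤ ∑ k ∈ Finset.range n, C * θ ^ (n + 1) * θ ^ k + 2 * (C * θ ^ (n + 1) / (1 - θ)) := by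
        grw [norm_involutionKernel_sub_le hθ0 hθ1 hA x₀ y y' x x' n, Finset.sum_le_sum hhead]
    _ ≤ C * θ ^ (n + 1) * (1 / (1 - θ)) + 2 * (C * θ ^ (n + 1) / (1 - θ)) := by
        rw [← Finset.mul_sum]
        gcongr
    _ = 3 * θ * C / (1 - θ) * θ ^ n := by ring

lemma holderC_dualPotential (hθ0 : 0 ≤ θ) (hθ1 : θ < 1) (hA : HolderC θ A C) (x₀ : Bsp d) :
    HolderC θ (dualPotential A x₀) (2 * C / (1 - θ)) := by
  have h1θ : 0 < 1 - θ := by linarith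
  have hC := hA.nonneg x₀
  rintro (_ | n) y y' hy
  · have hA0 : ‖A (cons (y 0) x₀) - A (cons (y' 0) x₀)‖ ≤ C := by
      simpa using hA 0 _ _ fun i hi => absurd hi (Nat.not_lt_zero i)
    have hW := norm_involutionKernel_sub_le hθ0 hθ1 hA x₀ (shift y) (shift y')
      (cons (y 0) x₀) (cons (y' 0) x₀) 0
    simp only [Finset.range_zero, Finset.sum_empty, zero_add, pow_one] at hW
    rw [dualPotential, dualPotential, add_sub_add_comm]
    grw [norm_add_le, hA0, hW, pow_zero, mul_one]
    have hsum : C + 2 * (C * θ / (1 - θ)) = C * (1 + θ) / (1 - θ) := by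
      field_simp
      ring
    rw [hsum]
    exact div_le_div_of_nonneg_right (by nlinarith) h1θ.le
  · have hhead : ∀ k ∈ Finset.range n,
        kernelTerm A x₀ (shift y) (cons (y 0) x₀) k -
          kernelTerm A x₀ (shift y') (cons (y 0) x₀) k = 0 := by
      intro k hk
      have hk : k + 1 ≤ n := Finset.mem_range.1 hk
      simp only [kernelTerm, prep_congr_of_agree hy.shift hk, sub_self]
    have hW := norm_involutionKernel_sub_le hθ0 hθ1 hA x₀ (shift y) (shift y')
      (cons (y 0) x₀) (cons (y 0) x₀) n
    rw [Finset.sum_eq_zero fun k hk => by rw [hhead k hk, norm_zero], zero_add] at hW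
    rw [dualPotential, dualPotential, ← hy 0 (Nat.zero_lt_succ n), add_sub_add_left_eq_sub]
    exact hW.trans_eq (by ring)

end InvolutionKernel

/-- existence of a θ-Hölder dual potential `A*` and involution kernel `W`
with `A*(y) = A(τ_y x) + W(σ̂⁻¹(y|x)) − W(y|x)`, `‖W‖_θ ≤ 3θ‖A‖_θ/(1−θ)` and
`‖A*‖_θ ≤ 2‖A‖_θ/(1−θ)`. -/
theorem exists_dual_potential {d : ℕ} {θ : ℝ} (hθ0 : 0 < θ) (hθ1 : θ < 1)
    (A : Bsp d → ℂ) (CA : ℝ) (hA : HolderC θ A CA) :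
    ∃ (Astar : Bsp d → ℂ) (W : Bsp d → Bsp d → ℂ),
      HolderC θ Astar (2 * CA / (1 - θ)) ∧
      HolderC2 θ W (3 * θ * CA / (1 - θ)) ∧
      ∀ (y x : Bsp d),
        Astar y = A (cons (y 0) x) + W (shift y) (cons (y 0) x) - W y x := by
  rcases isEmpty_or_nonempty (Bsp d) with _ | ⟨⟨x₀⟩⟩
  · exact ⟨0, 0, fun _ x => isEmptyElim x, fun _ y => isEmptyElim y, fun y => isEmptyElim y⟩
  · exact ⟨dualPotential A x₀, involutionKernel A x₀,
      holderC_dualPotential hθ0.le hθ1 hA x₀, holderC2_involutionKernel hθ0.le hθ1 hA x₀,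
      dualPotential_eq hθ0.le hθ1 hA x₀⟩
end
end

section
/- Let A be a θ-Hölder potential on Ω with dual potential A* on Ω* and bounded involution kernel W. Define ρ = lim_n sup_{x'∈Ω} (∫dx₁…∫dxₙ e^{Re Aⁿ(x₁…xₙx')})^{1/n} and ρ* = lim_n sup_{y'∈Ω*} (∫dy₁…∫dyₙ e^{Re (A*)ⁿ(y'y₁…yₙ)})^{1/n}, where integration is over an a priori probability measure ν on {1,…,d}. Then ρ = ρ*. -/
open scoped BigOperators
open Filter Topology

noncomputable section

/-!
The involution kernel identity writes `Aⁿ(x₁…xₙx') - (A*)ⁿ(y'x₁…xₙ)` as a difference of two values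
of `W`, so its real part is bounded by `2M` uniformly in `n`, `x'`, `y'` and the word. Hence the
`n`-th partition sums of `A` and `A*`, and then their suprema, agree up to the factor `e^{2M}`, which
disappears under `n`-th roots.
-/

open Set

lemma abs_re_sub_le_of_eq_sub_add {a b u v : ℂ} {M : ℝ} (h : a = u - v + b)
    (hu : |u.re| ≤ M) (hv : |v.re| ≤ M) : |a.re - b.re| ≤ 2 * M := by
  rw [h, Complex.add_re, Complex.sub_re, add_sub_cancel_right, two_mul]
  exact (abs_sub _ _).trans (add_le_add hu hv)

lemma sum_mul_exp_le_exp_mul_sum {σ : Type*} [Fintype σ] {p u v : σ → ℝ} {K : ℝ}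
    (hp : ∀ s, 0 ≤ p s) (huv : ∀ s, |u s - v s| ≤ K) :
    ∑ s, p s * Real.exp (u s) ≤ Real.exp K * ∑ s, p s * Real.exp (v s) := by
  rw [Finset.mul_sum]
  refine Finset.sum_le_sum fun s _ => ?_
  have hexp : Real.exp (u s) ≤ Real.exp K * Real.exp (v s) := by
    rw [← Real.exp_add, Real.exp_le_exp]
    linarith [le_of_abs_le (huv s)]
  calc p s * Real.exp (u s) ≤ p s * (Real.exp K * Real.exp (v s)) :=
        mul_le_mul_of_nonneg_left hexp (hp s)
    _ = Real.exp K * (p s * Real.exp (v s)) := by ring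

lemma bddAbove_range_of_le_const_mul {ι : Type*} {f g : ι → ℝ} {c : ℝ}
    (h : ∀ i j, g j ≤ c * f i) : BddAbove (range g) := by
  rcases isEmpty_or_nonempty ι with hι | ⟨⟨i⟩⟩
  · simp [range_eq_empty]
  · exact ⟨c * f i, forall_mem_range.2 (h i)⟩

lemma iSup_le_const_mul_iSup {ι : Type*} {f g : ι → ℝ} {c : ℝ} (hc : 0 ≤ c)
    (hg₀ : ∀ i, 0 ≤ g i) (hg : BddAbove (range g)) (hfg : ∀ i, f i ≤ c * g i) :
    ⨆ i, f i ≤ c * ⨆ i, g i :=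
  Real.iSup_le (fun i => (hfg i).trans (mul_le_mul_of_nonneg_left (le_ciSup hg i) hc))
    (mul_nonneg hc (Real.iSup_nonneg hg₀))

lemma tendsto_const_rpow_inv_natCast {c : ℝ} (hc : 0 < c) :
    Tendsto (fun n : ℕ => c ^ (n : ℝ)⁻¹) atTop (𝓝 1) := by
  simpa [Function.comp_def] using
    (Real.continuousAt_const_rpow hc.ne').tendsto.comp tendsto_inv_atTop_nhds_zero_nat

lemma le_of_tendsto_rpow_inv_of_le_const_mul {a b : ℕ → ℝ} {c ρ ρ' : ℝ} (hc : 0 < c)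
    (ha : ∀ n, 0 ≤ a n) (hb : ∀ n, 0 ≤ b n) (hab : ∀ n, a n ≤ c * b n)
    (hρ : Tendsto (fun n => a n ^ (n : ℝ)⁻¹) atTop (𝓝 ρ))
    (hρ' : Tendsto (fun n => b n ^ (n : ℝ)⁻¹) atTop (𝓝 ρ')) : ρ ≤ ρ' := by
  have hle : ∀ n : ℕ, a n ^ (n : ℝ)⁻¹ ≤ c ^ (n : ℝ)⁻¹ * b n ^ (n : ℝ)⁻¹ := fun n => by
    rw [← Real.mul_rpow hc.le (hb n)]
    exact Real.rpow_le_rpow (ha n) (hab n) (by positivity)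
  simpa using le_of_tendsto_of_tendsto' hρ ((tendsto_const_rpow_inv_natCast hc).mul hρ') hle

lemma le_of_tendsto_iSup_rpow_inv_of_le_const_mul {ι : Type*} {f g : ℕ → ι → ℝ} {c ρ ρ' : ℝ}
    (hc : 0 < c) (hf₀ : ∀ n i, 0 ≤ f n i) (hg₀ : ∀ n i, 0 ≤ g n i)
    (hfg : ∀ n i j, f n i ≤ c * g n j) (hgf : ∀ n i j, g n j ≤ c * f n i)
    (hρ : Tendsto (fun n => (⨆ i, f n i) ^ (n : ℝ)⁻¹) atTop (𝓝 ρ))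
    (hρ' : Tendsto (fun n => (⨆ i, g n i) ^ (n : ℝ)⁻¹) atTop (𝓝 ρ')) : ρ ≤ ρ' :=
  le_of_tendsto_rpow_inv_of_le_const_mul hc (fun n => Real.iSup_nonneg (hf₀ n))
    (fun n => Real.iSup_nonneg (hg₀ n))
    (fun n => iSup_le_const_mul_iSup hc.le (hg₀ n) (bddAbove_range_of_le_const_mul (hgf n))
      fun i => hfg n i i) hρ hρ'

theorem rho_eq_rho_star_general {d : ℕ} (w : Fin d → ℝ)
    (hw : ∀ a, 0 ≤ w a)
    (A : Bsp d → ℂ) (Astar : Bsp d → ℂ) (W : Bsp d → Bsp d → ℂ) (M : ℝ)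
    (hM : ∀ y x, |(W y x).re| ≤ M)
    (hker : ∀ (n : ℕ) (x' y' : Bsp d) (s : Fin n → Fin d),
      birkhoff A n (prepW s x') =
        W (appW y' s) x' - W y' (prepW s x') + birkhoff Astar n (appW y' s))
    (ρ ρstar : ℝ)
    (hρ : Filter.Tendsto
      (fun n : ℕ => (⨆ x' : Bsp d, ∑ s : Fin n → Fin d,
        (∏ i, w (s i)) * Real.exp ((birkhoff A n (prepW s x')).re)) ^ ((n : ℝ)⁻¹))
      Filter.atTop (nhds ρ))
    (hρs : Filter.Tendsto
      (fun n : ℕ => (⨆ y' : Bsp d, ∑ s : Fin n → Fin d,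
        (∏ i, w (s i)) * Real.exp ((birkhoff Astar n (appW y' s)).re)) ^ ((n : ℝ)⁻¹))
      Filter.atTop (nhds ρstar)) :
    ρ = ρstar := by
  set Z : ℕ → Bsp d → ℝ := fun n x' => ∑ s : Fin n → Fin d,
    (∏ i, w (s i)) * Real.exp ((birkhoff A n (prepW s x')).re)
  set Zstar : ℕ → Bsp d → ℝ := fun n y' => ∑ s : Fin n → Fin d,
    (∏ i, w (s i)) * Real.exp ((birkhoff Astar n (appW y' s)).re)
  have hp : ∀ n (s : Fin n → Fin d), 0 ≤ ∏ i, w (s i) := fun n s =>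
    Finset.prod_nonneg fun i _ => hw (s i)
  have hgap : ∀ n x' y' (s : Fin n → Fin d),
      |(birkhoff A n (prepW s x')).re - (birkhoff Astar n (appW y' s)).re| ≤ 2 * M :=
    fun n x' y' s => abs_re_sub_le_of_eq_sub_add (hker n x' y' s) (hM _ _) (hM _ _)
  have hZ : ∀ n x' y', Z n x' ≤ Real.exp (2 * M) * Zstar n y' := fun n x' y' =>
    sum_mul_exp_le_exp_mul_sum (hp n) (hgap n x' y')
  have hZstar : ∀ n x' y', Zstar n y' ≤ Real.exp (2 * M) * Z n x' := fun n x' y' =>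
    sum_mul_exp_le_exp_mul_sum (hp n) fun s => (abs_sub_comm _ _).trans_le (hgap n x' y' s)
  have hZ₀ : ∀ n x', 0 ≤ Z n x' := fun n x' =>
    Finset.sum_nonneg fun s _ => mul_nonneg (hp n s) (Real.exp_pos _).le
  have hZstar₀ : ∀ n y', 0 ≤ Zstar n y' := fun n y' =>
    Finset.sum_nonneg fun s _ => mul_nonneg (hp n s) (Real.exp_pos _).le
  exact le_antisymm
    (le_of_tendsto_iSup_rpow_inv_of_le_const_mul (Real.exp_pos _) hZ₀ hZstar₀ hZ hZstar hρ hρs)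
    (le_of_tendsto_iSup_rpow_inv_of_le_const_mul (Real.exp_pos _) hZstar₀ hZ₀
      (fun n y' x' => hZstar n x' y') (fun n y' x' => hZ n x' y') hρs hρ)

/-- `ρ = ρ*` — the upper bounds of the spectral radii of `L_A` and
`L_{A*}`, defined through the limits of n-th roots of the integrals of
`e^{Re Aⁿ}` resp. `e^{Re (A*)ⁿ}`, coincide (for a bounded involution kernel `W`). -/
theorem rho_eq_rho_star {d : ℕ} (hd : 0 < d) (w : Fin d → ℝ)
    (hw : ∀ a, 0 ≤ w a) (hw1 : ∑ a, w a = 1)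
    (A : Bsp d → ℂ) (Astar : Bsp d → ℂ) (W : Bsp d → Bsp d → ℂ) (M : ℝ)
    (hM : ∀ y x, |(W y x).re| ≤ M)
    (hker : ∀ (n : ℕ) (x' y' : Bsp d) (s : Fin n → Fin d),
      birkhoff A n (prepW s x') =
        W (appW y' s) x' - W y' (prepW s x') + birkhoff Astar n (appW y' s))
    (ρ ρstar : ℝ)
    (hρ : Filter.Tendsto
      (fun n : ℕ => (⨆ x' : Bsp d, ∑ s : Fin n → Fin d,
        (∏ i, w (s i)) * Real.exp ((birkhoff A n (prepW s x')).re)) ^ ((n : ℝ)⁻¹))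
      Filter.atTop (nhds ρ))
    (hρs : Filter.Tendsto
      (fun n : ℕ => (⨆ y' : Bsp d, ∑ s : Fin n → Fin d,
        (∏ i, w (s i)) * Real.exp ((birkhoff Astar n (appW y' s)).re)) ^ ((n : ℝ)⁻¹))
      Filter.atTop (nhds ρstar)) :
    ρ = ρstar :=
  rho_eq_rho_star_general w hw A Astar W M hM hker ρ ρstar hρ hρs
end
end

section
/- With D_{n,x'} defined as above and assuming ∫dx₁…∫dxₙ e^{Re (A*)ⁿ(0^∞x₁…xₙ)} ≤ (ρ+ε)ⁿ for n ≥ n₀, one has for every n ≥ n₀, z₁', z₂' ∈ Ω and φ ∈ H_θ(Ω*): |⟨D_{n,z₁'}, φ⟩ − ⟨D_{n,z₂'}, φ⟩| ≤ ‖ψ(·)e^{−W(0^∞|·)}‖_θ ‖φ‖_∞ ((ρ+ε)θ/|λ|)ⁿ. -/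
open scoped BigOperators
open Filter Topology

noncomputable section

/-!
The involution kernel lets one trade the pair `(A, W(·|x'))` in the summand of `D_{n,x'}` for
`(A*, W(0^∞|·))`: the summand becomes `g(x₁…xₙx') e^{(A*)ⁿ(0^∞x₁…xₙ)} φ(0^∞x₁…xₙ) / λⁿ` with
`g = ψ e^{−W(0^∞|·)}`, and only the first factor depends on the base point. Since
`x₁…xₙz₁' ∼ₙ x₁…xₙz₂'`, the Hölder bound on `g` makes the difference of these factors at most
`‖g‖_θ θⁿ`, and the remaining weights sum to at most `(ρ+ε)ⁿ`.
-/

theorem agree_prepW {d n : ℕ} (s : Fin n → Fin d) (x x' : Bsp d) :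
    agree n (prepW s x) (prepW s x') := by
  intro i hi
  simp [prepW, hi]

theorem HolderC.mul_pow_nonneg {d : ℕ} {E : Type*} [SeminormedAddGroup E] {θ C : ℝ}
    {f : Bsp d → E} (hf : HolderC θ f C) (x : Bsp d) (n : ℕ) : 0 ≤ C * θ ^ n := by
  simpa using hf n x x fun _ _ => rfl

theorem norm_ofReal_mul_mul_exp_div_le {c K M : ℝ} {u v B lam : ℂ} (hc : 0 ≤ c)
    (hu : ‖u‖ ≤ K) (hv : ‖v‖ ≤ M) (n : ℕ) :
    ‖(c : ℂ) * (u * (Complex.exp B / lam ^ n * v))‖ ≤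
      c * Real.exp B.re * (K * M / ‖lam‖ ^ n) := by
  have hK : 0 ≤ K := (norm_nonneg u).trans hu
  rw [norm_mul, norm_mul, norm_mul, norm_div, norm_pow, Complex.norm_exp, Complex.norm_real,
    Real.norm_of_nonneg hc]
  calc c * (‖u‖ * (Real.exp B.re / ‖lam‖ ^ n * ‖v‖))
      ≤ c * (K * (Real.exp B.re / ‖lam‖ ^ n * M)) := by gcongr
    _ = c * Real.exp B.re * (K * M / ‖lam‖ ^ n) := by ring

section Dn

variable {d : ℕ} (w : Fin d → ℝ) {A Astar : Bsp d → ℂ} {W : Bsp d → Bsp d → ℂ}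
  (ψ : Bsp d → ℂ) (lam : ℂ) (o : Fin d) {n : ℕ} (φ : Bsp d → ℂ)

theorem Dn_eq_sum_dual
    (hker : ∀ (x : Bsp d) (s : Fin n → Fin d),
      birkhoff A n (prepW s x) - W (appW (fun _ => o) s) x =
        birkhoff Astar n (appW (fun _ => o) s) - W (fun _ => o) (prepW s x))
    (z : Bsp d) :
    Dn w A W ψ lam o n z φ =
      ∑ s : Fin n → Fin d, ((∏ i, w (s i) : ℝ) : ℂ) *
        (ψ (prepW s z) * Complex.exp (-(W (fun _ => o) (prepW s z))) *
          (Complex.exp (birkhoff Astar n (appW (fun _ => o) s)) / lam ^ n *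
            φ (appW (fun _ => o) s))) := by
  refine Finset.sum_congr rfl fun s _ => ?_
  have hexp : Complex.exp (birkhoff A n (prepW s z)) *
      Complex.exp (-(W (appW (fun _ => o) s) z)) =
      Complex.exp (-(W (fun _ => o) (prepW s z))) *
        Complex.exp (birkhoff Astar n (appW (fun _ => o) s)) := by
    rw [← Complex.exp_add, ← Complex.exp_add]
    congr 1
    linear_combination hker z s
  rw [div_eq_mul_inv, div_eq_mul_inv]
  linear_combination
    ((∏ i, w (s i) : ℝ) : ℂ) * ψ (prepW s z) * (lam ^ n)⁻¹ * φ (appW (fun _ => o) s) * hexp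

theorem Dn_sub_Dn_eq_sum
    (hker : ∀ (x : Bsp d) (s : Fin n → Fin d),
      birkhoff A n (prepW s x) - W (appW (fun _ => o) s) x =
        birkhoff Astar n (appW (fun _ => o) s) - W (fun _ => o) (prepW s x))
    (z₁ z₂ : Bsp d) :
    Dn w A W ψ lam o n z₁ φ - Dn w A W ψ lam o n z₂ φ =
      ∑ s : Fin n → Fin d, ((∏ i, w (s i) : ℝ) : ℂ) *
        ((ψ (prepW s z₁) * Complex.exp (-(W (fun _ => o) (prepW s z₁))) -
            ψ (prepW s z₂) * Complex.exp (-(W (fun _ => o) (prepW s z₂)))) *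
          (Complex.exp (birkhoff Astar n (appW (fun _ => o) s)) / lam ^ n *
            φ (appW (fun _ => o) s))) := by
  rw [Dn_eq_sum_dual w ψ lam o φ hker, Dn_eq_sum_dual w ψ lam o φ hker,
    ← Finset.sum_sub_distrib]
  exact Finset.sum_congr rfl fun s _ => by ring

end Dn

theorem Dn_basepoint_comparison_general {d : ℕ} {θ : ℝ}
    (w : Fin d → ℝ) (hw : ∀ a, 0 ≤ w a) (o : Fin d)
    (A Astar : Bsp d → ℂ) (W : Bsp d → Bsp d → ℂ) (ψ : Bsp d → ℂ) (lam : ℂ)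
    (Cψ Mφ ρ ε : ℝ) (n₀ : ℕ)
    (hker : ∀ (n : ℕ) (x'' : Bsp d) (s : Fin n → Fin d),
      birkhoff A n (prepW s x'') - W (appW (fun _ => o) s) x'' =
        birkhoff Astar n (appW (fun _ => o) s) - W (fun _ => o) (prepW s x''))
    (hints : ∀ n, n₀ ≤ n →
      ∑ s : Fin n → Fin d, (∏ i, w (s i)) *
        Real.exp ((birkhoff Astar n (appW (fun _ => o) s)).re) ≤ (ρ + ε) ^ n)
    (hHol : HolderC θ (fun x => ψ x * Complex.exp (-(W (fun _ => o) x))) Cψ)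
    (φ : Bsp d → ℂ) (hφ : ∀ y, ‖φ y‖ ≤ Mφ) :
    ∀ n, n₀ ≤ n → ∀ z₁ z₂ : Bsp d,
      ‖Dn w A W ψ lam o n z₁ φ - Dn w A W ψ lam o n z₂ φ‖ ≤
        Cψ * Mφ * (((ρ + ε) * θ) / ‖lam‖) ^ n := by
  intro n hn z₁ z₂
  have hMφ : 0 ≤ Mφ := (norm_nonneg _).trans (hφ z₁)
  have hCθ : 0 ≤ Cψ * θ ^ n := hHol.mul_pow_nonneg z₁ n
  rw [Dn_sub_Dn_eq_sum w ψ lam o φ (hker n)]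
  calc _ ≤ ∑ s : Fin n → Fin d, (∏ i, w (s i)) *
          Real.exp ((birkhoff Astar n (appW (fun _ => o) s)).re) *
            (Cψ * θ ^ n * Mφ / ‖lam‖ ^ n) :=
        (norm_sum_le _ _).trans <| Finset.sum_le_sum fun s _ =>
          norm_ofReal_mul_mul_exp_div_le (Finset.prod_nonneg fun i _ => hw (s i))
            (hHol n _ _ (agree_prepW s z₁ z₂)) (hφ _) n
    _ ≤ (ρ + ε) ^ n * (Cψ * θ ^ n * Mφ / ‖lam‖ ^ n) := by
        rw [← Finset.sum_mul]
        gcongr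
        exact hints n hn
    _ = Cψ * Mφ * (((ρ + ε) * θ) / ‖lam‖) ^ n := by rw [div_pow, mul_pow]; ring

/-- base-point comparison:
`|⟨D_{n,z₁'},φ⟩ − ⟨D_{n,z₂'},φ⟩| ≤ ‖ψ(·)e^{−W(0^∞|·)}‖_θ ‖φ‖_∞ ((ρ+ε)θ/|λ|)ⁿ`. -/
theorem Dn_basepoint_comparison {d : ℕ} {θ : ℝ} (hθ0 : 0 < θ) (hθ1 : θ < 1)
    (w : Fin d → ℝ) (hw : ∀ a, 0 ≤ w a) (o : Fin d)
    (A Astar : Bsp d → ℂ) (W : Bsp d → Bsp d → ℂ) (ψ : Bsp d → ℂ) (lam : ℂ)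
    (hlam : lam ≠ 0) (Cψ Mφ ρ ε : ℝ) (n₀ : ℕ)
    (hker : ∀ (n : ℕ) (x'' : Bsp d) (s : Fin n → Fin d),
      birkhoff A n (prepW s x'') - W (appW (fun _ => o) s) x'' =
        birkhoff Astar n (appW (fun _ => o) s) - W (fun _ => o) (prepW s x''))
    (hints : ∀ n, n₀ ≤ n →
      ∑ s : Fin n → Fin d, (∏ i, w (s i)) *
        Real.exp ((birkhoff Astar n (appW (fun _ => o) s)).re) ≤ (ρ + ε) ^ n)
    (hHol : HolderC θ (fun x => ψ x * Complex.exp (-(W (fun _ => o) x))) Cψ)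
    (φ : Bsp d → ℂ) (hφ : ∀ y, ‖φ y‖ ≤ Mφ) :
    ∀ n, n₀ ≤ n → ∀ z₁ z₂ : Bsp d,
      ‖Dn w A W ψ lam o n z₁ φ - Dn w A W ψ lam o n z₂ φ‖ ≤
        Cψ * Mφ * (((ρ + ε) * θ) / ‖lam‖) ^ n :=
  Dn_basepoint_comparison_general w hw o A Astar W ψ lam Cψ Mφ ρ ε n₀ hker hints hHol φ hφ
end
end

section
/- Assume |λ| > (ρ+ε)θ and let ψ ∈ H_θ(Ω) be a λ-eigenfunction of L_A. Then for every φ ∈ H_θ(Ω*) and every x' ∈ Ω, the limit ⟨D, φ⟩ = lim_{n→∞} ⟨D_{n,x'}, φ⟩ exists and is independent of x'; moreover for n ≥ n₀, |⟨D, φ⟩ − ⟨D_{n,x'}, φ⟩| ≤ ‖e^{W(·|x')}φ‖_θ ‖ψ‖_∞ ((ρ+ε)/(|λ| − (ρ+ε)θ)) ((ρ+ε)θ/|λ|)ⁿ. -/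
open scoped BigOperators
open Filter Topology

noncomputable section

set_option maxHeartbeats 1000000 in
/-- assuming `|λ| > (ρ+ε)θ` and the Cauchy and base-point estimates
of the preceding two lemmas, the limit `⟨D,φ⟩ = lim_n ⟨D_{n,x'},φ⟩` exists, is
independent of `x'`, and `|⟨D,φ⟩ − ⟨D_{n,x'},φ⟩| ≤ K'((ρ+ε)θ/|λ|)ⁿ/(1−(ρ+ε)θ/|λ|)`
for `n ≥ n₀`. -/
theorem Dn_limit_exists {d : ℕ} {θ : ℝ} (hθ0 : 0 < θ) (hθ1 : θ < 1)
    (w : Fin d → ℝ) (o : Fin d)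
    (A : Bsp d → ℂ) (W : Bsp d → Bsp d → ℂ) (ψ : Bsp d → ℂ) (lam : ℂ)
    (ρ ε : ℝ) (hρ : 0 ≤ ρ) (hε : 0 < ε)
    (hlam : (ρ + ε) * θ < ‖lam‖) (n₀ : ℕ)
    (φ : Bsp d → ℂ) (K' C' : ℝ)
    (hK : ∀ (x' : Bsp d) (n : ℕ), n₀ ≤ n →
      ‖Dn w A W ψ lam o (n + 1) x' φ - Dn w A W ψ lam o n x' φ‖ ≤
        K' * (((ρ + ε) * θ) / ‖lam‖) ^ n)
    (hC : ∀ (z₁ z₂ : Bsp d) (n : ℕ), n₀ ≤ n →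
      ‖Dn w A W ψ lam o n z₁ φ - Dn w A W ψ lam o n z₂ φ‖ ≤
        C' * (((ρ + ε) * θ) / ‖lam‖) ^ n) :
    ∃ L : ℂ, ∀ x' : Bsp d,
      Filter.Tendsto (fun n => Dn w A W ψ lam o n x' φ) Filter.atTop (nhds L) ∧
      ∀ n, n₀ ≤ n →
        ‖L - Dn w A W ψ lam o n x' φ‖ ≤
          (K' / (1 - ((ρ + ε) * θ) / ‖lam‖)) * (((ρ + ε) * θ) / ‖lam‖) ^ n := by
  set r : ℝ := ((ρ + ε) * θ) / ‖lam‖ with hr_def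
  have hlam0 : (0:ℝ) < ‖lam‖ := lt_of_le_of_lt (by positivity) hlam
  have hr0 : 0 < r := by
    apply div_pos _ hlam0
    positivity
  have hr1 : r < 1 := (div_lt_one hlam0).mpr hlam
  -- shifted sequence at a fixed base point
  have key : ∀ x' : Bsp d,
      (∀ m : ℕ, dist (Dn w A W ψ lam o (m + n₀) x' φ)
        (Dn w A W ψ lam o (m + 1 + n₀) x' φ) ≤ (K' * r ^ n₀) * r ^ m) := by
    intro x' m
    rw [dist_eq_norm, norm_sub_rev]
    have h := hK x' (m + n₀) (Nat.le_add_left _ _)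
    calc ‖Dn w A W ψ lam o (m + 1 + n₀) x' φ - Dn w A W ψ lam o (m + n₀) x' φ‖
        = ‖Dn w A W ψ lam o (m + n₀ + 1) x' φ - Dn w A W ψ lam o (m + n₀) x' φ‖ := by
          rw [Nat.add_right_comm m 1 n₀]
      _ ≤ K' * r ^ (m + n₀) := h
      _ = (K' * r ^ n₀) * r ^ m := by ring
  set x₀ : Bsp d := fun _ => o with hx₀
  have hcauchy : CauchySeq (fun m => Dn w A W ψ lam o (m + n₀) x₀ φ) :=
    cauchySeq_of_le_geometric r (K' * r ^ n₀) hr1 (key x₀)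
  obtain ⟨L, hL⟩ := cauchySeq_tendsto_of_complete hcauchy
  refine ⟨L, fun x' => ?_⟩
  -- first: convergence for every x'
  have hL0 : Tendsto (fun n => Dn w A W ψ lam o n x₀ φ) atTop (𝓝 L) :=
    (tendsto_add_atTop_iff_nat n₀).mp hL
  have hdiff : Tendsto (fun n => Dn w A W ψ lam o n x' φ - Dn w A W ψ lam o n x₀ φ)
      atTop (𝓝 0) := by
    refine squeeze_zero_norm' (a := fun n => C' * r ^ n) ?_ ?_
    · filter_upwards [eventually_ge_atTop n₀] with n hn
      exact hC x' x₀ n hn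
    · simpa using (tendsto_pow_atTop_nhds_zero_of_lt_one (le_of_lt hr0) hr1).const_mul C'
  have htend : Tendsto (fun n => Dn w A W ψ lam o n x' φ) atTop (𝓝 L) := by
    have := hdiff.add hL0
    simpa using this
  refine ⟨htend, fun n hn => ?_⟩
  -- error bound: apply geometric tail estimate to the shifted sequence at x'
  have htend' : Tendsto (fun m => Dn w A W ψ lam o (m + n₀) x' φ) atTop (𝓝 L) :=
    (tendsto_add_atTop_iff_nat n₀).mpr htend
  obtain ⟨m, rfl⟩ : ∃ m, n = m + n₀ := ⟨n - n₀, (Nat.sub_add_cancel hn).symm⟩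
  have hb := dist_le_of_le_geometric_of_tendsto r (K' * r ^ n₀) hr1 (key x') htend' m
  rw [dist_eq_norm, norm_sub_rev] at hb
  calc ‖L - Dn w A W ψ lam o (m + n₀) x' φ‖ ≤ (K' * r ^ n₀) * r ^ m / (1 - r) := hb
    _ = (K' / (1 - r)) * r ^ (m + n₀) := by ring
end
end

section
/- Let D be the limit distribution from the preceding construction, built from a λ-eigenfunction ψ of L_A. Then Φ_W(D) = ψ, i.e. for every x' ∈ Ω, ⟨D, e^{W(·|x')}⟩ = ψ(x'). The key identity is ⟨D_{n,x'}, e^{W(·|x')}⟩ = λ^{−n} L_Aⁿ ψ(x') = ψ(x') for all n. -/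
open scoped BigOperators
open Filter Topology

noncomputable section

lemma prepW_cons_aux {d n : ℕ} (a : Fin d) (s : Fin n → Fin d) (x : Bsp d) :
    prepW (Fin.cons a s) x = cons a (prepW s x) := by
  funext m
  cases m with
  | zero => simp [prepW, cons]
  | succ k =>
    simp only [prepW, cons, Nat.succ_ne_zero, if_false, Nat.succ_sub_one]
    by_cases h : k < n
    · rw [dif_pos (Nat.succ_lt_succ h), dif_pos h]
      have : (⟨k + 1, Nat.succ_lt_succ h⟩ : Fin (n + 1)) = Fin.succ ⟨k, h⟩ := rfl
      rw [this, Fin.cons_succ]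
    · rw [dif_neg (by omega), dif_neg h]
      congr 1
      omega

lemma birkhoff_cons_aux {d n : ℕ} (A : Bsp d → ℂ) (a : Fin d) (y : Bsp d) :
    birkhoff A (n + 1) (cons a y) = A (cons a y) + birkhoff A n y := by
  unfold birkhoff
  rw [Finset.sum_range_succ']
  have h1 : ∀ k, (fun i => cons a y (i + (k + 1))) = (fun i => y (i + k)) := by
    intro k; funext i
    simp only [cons]
    rw [if_neg (by omega)]
    congr 1
  have h0 : (fun i => cons a y (i + 0)) = cons a y := by funext i; simp
  simp only [h1]
  rw [h0, add_comm]

lemma ruelle_pow_aux {d : ℕ} (w : Fin d → ℝ) (A : Bsp d → ℂ) (ψ : Bsp d → ℂ) (lam : ℂ)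
    (heigen : ∀ x, Ruelle w A ψ x = lam * ψ x) (n : ℕ) (x : Bsp d) :
    ∑ s : Fin n → Fin d, ((∏ i, w (s i) : ℝ) : ℂ) *
      (Complex.exp (birkhoff A n (prepW s x)) * ψ (prepW s x)) = lam ^ n * ψ x := by
  induction n generalizing x with
  | zero =>
    have hp : ∀ s : Fin 0 → Fin d, prepW s x = x := by
      intro s; funext m; simp [prepW]
    simp [hp, birkhoff]
  | succ n ih =>
    rw [← (Fin.consEquiv (fun _ : Fin (n + 1) => Fin d)).sum_comp
      (fun t : Fin (n + 1) → Fin d => ((∏ i, w (t i) : ℝ) : ℂ) *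
        (Complex.exp (birkhoff A (n + 1) (prepW t x)) * ψ (prepW t x)))]
    rw [Fintype.sum_prod_type]
    have key : ∀ (a : Fin d) (s : Fin n → Fin d),
        ((∏ i, w ((Fin.consEquiv (fun _ : Fin (n+1) => Fin d)) (a, s) i) : ℝ) : ℂ) *
          (Complex.exp (birkhoff A (n + 1) (prepW ((Fin.consEquiv _) (a, s)) x)) *
            ψ (prepW ((Fin.consEquiv _) (a, s)) x))
        = ((∏ i, w (s i) : ℝ) : ℂ) *
          ((w a : ℂ) * (Complex.exp (A (cons a (prepW s x))) * ψ (cons a (prepW s x)))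
            * Complex.exp (birkhoff A n (prepW s x))) := by
      intro a s
      have hc : (Fin.consEquiv (fun _ : Fin (n+1) => Fin d)) (a, s) = Fin.cons a s := rfl
      rw [hc, prepW_cons_aux, birkhoff_cons_aux, Fin.prod_univ_succ, Complex.exp_add]
      simp only [Fin.cons_zero, Fin.cons_succ]
      push_cast
      ring
    calc ∑ a : Fin d, ∑ s : Fin n → Fin d, _
        = ∑ a : Fin d, ∑ s : Fin n → Fin d, ((∏ i, w (s i) : ℝ) : ℂ) *
            ((w a : ℂ) * (Complex.exp (A (cons a (prepW s x))) * ψ (cons a (prepW s x)))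
              * Complex.exp (birkhoff A n (prepW s x))) := by
          exact Finset.sum_congr rfl fun a _ => Finset.sum_congr rfl fun s _ => key a s
      _ = ∑ s : Fin n → Fin d, ((∏ i, w (s i) : ℝ) : ℂ) *
            (Ruelle w A ψ (prepW s x) * Complex.exp (birkhoff A n (prepW s x))) := by
          rw [Finset.sum_comm]
          refine Finset.sum_congr rfl fun s _ => ?_
          rw [Ruelle, Finset.sum_mul, Finset.mul_sum]
      _ = lam * (lam ^ n * ψ x) := by
          rw [← ih x, Finset.mul_sum]
          refine Finset.sum_congr rfl fun s _ => ?_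
          rw [heigen]
          ring
      _ = lam ^ (n + 1) * ψ x := by ring

/-- `Φ_W(D) = ψ`: pairing `D_{n,x'}` with `e^{W(·|x')}` gives
`λ^{−n} L_Aⁿ ψ(x') = ψ(x')` for all `n`, hence the limit distribution `D`
satisfies `⟨D, e^{W(·|x')}⟩ = ψ(x')`. -/
theorem PhiW_of_limit_eq_eigenfunction {d : ℕ} (w : Fin d → ℝ) (o : Fin d)
    (A : Bsp d → ℂ) (W : Bsp d → Bsp d → ℂ) (ψ : Bsp d → ℂ) (lam : ℂ)
    (hlam : lam ≠ 0)
    (heigen : ∀ x, Ruelle w A ψ x = lam * ψ x) :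
    (∀ (x' : Bsp d) (n : ℕ),
      Dn w A W ψ lam o n x' (fun y => Complex.exp (W y x')) = ψ x') ∧
    ∀ (x' : Bsp d) (Dv : ℂ),
      Filter.Tendsto (fun n => Dn w A W ψ lam o n x' (fun y => Complex.exp (W y x')))
        Filter.atTop (nhds Dv) → Dv = ψ x' := by
  have hmain : ∀ (x' : Bsp d) (n : ℕ),
      Dn w A W ψ lam o n x' (fun y => Complex.exp (W y x')) = ψ x' := by
    intro x' n
    unfold Dn
    have hterm : ∀ s : Fin n → Fin d,
        ((∏ i, w (s i) : ℝ) : ℂ) *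
          (ψ (prepW s x') * (Complex.exp (birkhoff A n (prepW s x')) / lam ^ n) *
            Complex.exp (-(W (appW (fun _ => o) s) x')) *
            Complex.exp (W (appW (fun _ => o) s) x'))
        = (((∏ i, w (s i) : ℝ) : ℂ) *
            (Complex.exp (birkhoff A n (prepW s x')) * ψ (prepW s x'))) / lam ^ n := by
      intro s
      rw [mul_assoc _ (Complex.exp _) (Complex.exp _), ← Complex.exp_add,
        neg_add_cancel, Complex.exp_zero, mul_one]
      ring
    rw [Finset.sum_congr rfl fun s _ => hterm s, ← Finset.sum_div,
      ruelle_pow_aux w A ψ lam heigen n x', mul_comm,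
      mul_div_assoc, div_self (pow_ne_zero n hlam), mul_one]
  refine ⟨hmain, fun x' Dv hDv => ?_⟩
  have : Filter.Tendsto (fun n => Dn w A W ψ lam o n x' (fun y => Complex.exp (W y x')))
      Filter.atTop (nhds (ψ x')) := by
    simp only [hmain]; exact tendsto_const_nhds
  exact tendsto_nhds_unique hDv this
end
end
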